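/- Fix δ ∈ (0,1). There exist constants C > 0 and C' > 0, depending only on δ, such that for every positive integer m and every nonnegative integer t with t ≤ (1 − δ)·m the following holds: if w_1, …, w_m are i.i.d. standard normal N(0,1) random variables and w²_{(1)} ≤ w²_{(2)} ≤ ⋯ ≤ w²_{(m)} denote the order statistics of w_1², …, w_m², then Pr( w²_{(1)} + w²_{(2)} + ⋯ + w²_{(m−t)} > C·m ) ≥ 1 − C'/m. Equivalently, with probability at least 1 − C'/m, every subset S ⊆ {1,…,m} with |S| = m − t of minimal sum satisfies Σ_{i∈S} w_i² > C·m. (Lemma: partial sum of the smallest squared Gaussians.) -/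

import Mathlib

/-!
The standard Gaussian density is at most `1`, so `|w_i| < δ/8` has probability at most `δ/4`.
The number of such small `w_i` is a sum of independent indicators with mean and variance at
most `δm/4`, so by Chebyshev it stays below `δm/2` outside an event of probability `4/(δm)`.
On the complement, a set `S` of size `m - t ≥ δm` has more than `δm/2` indices with
`w_i² ≥ (δ/8)²`, so its sum exceeds `(δ/8)² · δm/2`.
-/

open MeasureTheory ProbabilityTheory Finset Real
open scoped NNReal ENNReal

lemma gaussianPDFReal_le_inv_sqrt (μ : ℝ) (v : ℝ≥0) (x : ℝ) :
    gaussianPDFReal μ v x ≤ (√(2 * π * v))⁻¹ := by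
  rw [gaussianPDFReal]
  refine mul_le_of_le_one_right (by positivity) (exp_le_one_iff.mpr ?_)
  exact div_nonpos_of_nonpos_of_nonneg (neg_nonpos.mpr (sq_nonneg _)) (by positivity)

lemma gaussianReal_one_le_volume (μ : ℝ) (s : Set ℝ) : gaussianReal μ 1 s ≤ volume s := by
  have hpdf : ∀ x, gaussianPDF μ 1 x ≤ 1 := fun x ↦ by
    refine ENNReal.ofReal_le_one.mpr ((gaussianPDFReal_le_inv_sqrt μ 1 x).trans ?_)
    refine inv_le_one_of_one_le₀ (one_le_sqrt.mpr ?_)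
    have := pi_gt_three
    push_cast
    linarith
  calc gaussianReal μ 1 s = ∫⁻ x in s, gaussianPDF μ 1 x :=
        gaussianReal_apply μ one_ne_zero s
    _ ≤ ∫⁻ _ in s, 1 := lintegral_mono hpdf
    _ = volume s := setLIntegral_one s

lemma gaussianReal_one_sq_lt_sq_le (μ : ℝ) {a : ℝ} (ha : 0 ≤ a) :
    gaussianReal μ 1 {x | x ^ 2 < a ^ 2} ≤ ENNReal.ofReal (2 * a) :=
  calc gaussianReal μ 1 {x | x ^ 2 < a ^ 2} ≤ gaussianReal μ 1 (Set.Ioo (-a) a) :=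
        measure_mono fun x (hx : x ^ 2 < a ^ 2) ↦ abs_lt_of_sq_lt_sq' hx ha
    _ ≤ volume (Set.Ioo (-a) a) := gaussianReal_one_le_volume μ _
    _ = ENNReal.ofReal (2 * a) := by rw [Real.volume_Ioo, sub_neg_eq_add, two_mul]

lemma variance_indicator_one_le {Ω : Type*} [MeasurableSpace Ω] {P : Measure Ω}
    [IsProbabilityMeasure P] {s : Set Ω} (hs : MeasurableSet s) :
    variance (s.indicator 1) P ≤ P.real s := by
  have hsq : s.indicator (1 : Ω → ℝ) ^ 2 = s.indicator 1 := by
    ext ω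
    by_cases h : ω ∈ s <;> simp [h]
  calc variance (s.indicator 1) P ≤ P[s.indicator 1 ^ 2] :=
        variance_le_expectation_sq (by fun_prop (disch := exact hs))
    _ = P.real s := by rw [hsq, integral_indicator_one hs]

lemma Finset.mul_card_sub_card_filter_lt_le_sum {ι : Type*} [Fintype ι] {f : ι → ℝ}
    (hf : ∀ i, 0 ≤ f i) {ε : ℝ} (hε : 0 ≤ ε) (S : Finset ι) :
    ε * ((#S : ℝ) - #{i | f i < ε}) ≤ ∑ i ∈ S, f i := by
  have hcard : (#S : ℝ) - #{i | f i < ε} ≤ #{i ∈ S | ε ≤ f i} := by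
    have hsplit := card_filter_add_card_filter_not (s := S) (fun i ↦ f i < ε)
    have hsub : #{i ∈ S | f i < ε} ≤ #{i | f i < ε} :=
      card_le_card (filter_subset_filter _ (subset_univ S))
    simp only [not_lt] at hsplit
    rw [sub_le_iff_le_add]
    exact_mod_cast hsplit.symm.le.trans (by omega)
  calc ε * ((#S : ℝ) - #{i | f i < ε}) ≤ #{i ∈ S | ε ≤ f i} * ε := by
        rw [mul_comm]; exact mul_le_mul_of_nonneg_right hcard hε
    _ ≤ ∑ i ∈ S with ε ≤ f i, f i := by
        rw [← nsmul_eq_mul]; exact card_nsmul_le_sum _ _ _ fun i hi ↦ (mem_filter.mp hi).2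
    _ ≤ ∑ i ∈ S, f i := sum_le_sum_of_subset_of_nonneg (filter_subset _ _) fun i _ _ ↦ hf i

open Classical in
lemma meas_card_mem_ge_le {ι Ω α : Type*} [Fintype ι] [MeasurableSpace Ω] [MeasurableSpace α]
    {P : Measure Ω} [IsProbabilityMeasure P] {w : ι → Ω → α} (hw : ∀ i, Measurable (w i))
    (hind : iIndepFun w P) {A : Set α} (hA : MeasurableSet A) {p c : ℝ}
    (hp : ∀ i, P.real (w i ⁻¹' A) ≤ p) (hc : 0 < c) :
    P {ω | Fintype.card ι * p + c ≤ #{i | w i ω ∈ A}} ≤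
      ENNReal.ofReal (Fintype.card ι * p / c ^ 2) := by
  set X : ι → Ω → ℝ := fun i ↦ (w i ⁻¹' A).indicator 1
  have hXL2 : ∀ i, MemLp (X i) 2 P := fun i ↦ (memLp_const 1).indicator (hw i hA)
  have hXind : iIndepFun X P :=
    hind.comp (fun _ ↦ A.indicator 1) (fun _ ↦ measurable_const.indicator hA)
  have hcount : ∀ ω, (∑ i, X i) ω = #{i | w i ω ∈ A} := fun ω ↦ by
    simp only [X, Finset.sum_apply, Set.indicator_apply, Set.mem_preimage, Pi.one_apply,
      sum_boole]
  have hsum_le : ∀ f : ι → ℝ, (∀ i, f i ≤ p) → ∑ i, f i ≤ Fintype.card ι * p := fun f hf ↦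
    (sum_le_sum fun i _ ↦ hf i).trans_eq (by simp)
  have hmean : P[∑ i, X i] ≤ Fintype.card ι * p := by
    simp only [Finset.sum_apply]
    rw [integral_finsetSum _ fun i _ ↦ (hXL2 i).integrable one_le_two]
    exact hsum_le _ fun i ↦ (integral_indicator_one (hw i hA)).trans_le (hp i)
  have hvar : variance (∑ i, X i) P ≤ Fintype.card ι * p := by
    rw [IndepFun.variance_sum (fun i _ ↦ hXL2 i) (fun i _ j _ hij ↦ hXind.indepFun hij)]
    exact hsum_le _ fun i ↦ (variance_indicator_one_le (hw i hA)).trans (hp i)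
  calc P {ω | Fintype.card ι * p + c ≤ #{i | w i ω ∈ A}}
      ≤ P {ω | c ≤ |(∑ i, X i) ω - P[∑ i, X i]|} := by
        refine measure_mono fun ω hω ↦ ?_
        simp only [Set.mem_ofPred_eq] at hω ⊢
        rw [← hcount] at hω
        exact (by linarith : c ≤ _).trans (le_abs_self _)
    _ ≤ ENNReal.ofReal (variance (∑ i, X i) P / c ^ 2) :=
        meas_ge_le_variance_div_sq (memLp_finsetSum' _ fun i _ ↦ hXL2 i) hc
    _ ≤ ENNReal.ofReal (Fintype.card ι * p / c ^ 2) := by gcongr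

lemma one_sub_measure_le_measure_compl {Ω : Type*} [MeasurableSpace Ω] (P : Measure Ω)
    [IsProbabilityMeasure P] (s : Set Ω) : 1 - P s ≤ P sᶜ := by
  rw [tsub_le_iff_left]
  calc 1 = P (s ∪ sᶜ) := by rw [Set.union_compl_self, measure_univ]
    _ ≤ P s + P sᶜ := measure_union_le _ _

theorem partial_sum_smallest_squared_gaussians_general
    (δ : ℝ) (hδ0 : 0 < δ) :
    ∃ C C' : ℝ, 0 < C ∧ 0 < C' ∧
      ∀ (m t : ℕ), 0 < m → (t : ℝ) ≤ (1 - δ) * m →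
      ∀ (Ω : Type) (_ : MeasurableSpace Ω) (P : Measure Ω), IsProbabilityMeasure P →
      ∀ (w : Fin m → Ω → ℝ),
        (∀ i, Measurable (w i)) →
        (∀ i, Measure.map (w i) P = gaussianReal 0 1) →
        iIndepFun w P →
      P {ω | ∀ S : Finset (Fin m), S.card = m - t → C * m < ∑ i ∈ S, w i ω ^ 2}
        ≥ 1 - ENNReal.ofReal (C' / m) := by
  refine ⟨(δ / 8) ^ 2 * δ / 2, 4 / δ, by positivity, by positivity, ?_⟩
  intro m t hm ht Ω _ P _ w hw hmap hind
  set A : Set ℝ := {x | x ^ 2 < (δ / 8) ^ 2}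
  have hA : MeasurableSet A := measurableSet_lt (by fun_prop) measurable_const
  have hpA : ∀ i, P.real (w i ⁻¹' A) ≤ δ / 4 := fun i ↦ by
    refine ENNReal.toReal_le_of_le_ofReal (by positivity) ?_
    rw [← Measure.map_apply (hw i) hA, hmap i]
    convert gaussianReal_one_sq_lt_sq_le 0 (by positivity : 0 ≤ δ / 8) using 2
    ring
  have hm' : (0 : ℝ) < m := Nat.cast_pos.mpr hm
  have hbad := meas_card_mem_ge_le hw hind hA hpA (c := δ * m / 4) (by positivity)
  rw [Fintype.card_fin, show (m : ℝ) * (δ / 4) / (δ * m / 4) ^ 2 = 4 / δ / m by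
    field_simp] at hbad
  refine ((tsub_le_tsub_left hbad 1).trans (one_sub_measure_le_measure_compl P _)).trans
    (measure_mono fun ω hω S hS ↦ ?_)
  simp only [Set.mem_compl_iff, Set.mem_ofPred_eq, not_le] at hω
  have hS' : δ * m ≤ (S.card : ℝ) := by
    rw [hS, Nat.cast_sub (by exact_mod_cast (by nlinarith : (t : ℝ) ≤ m))]
    linarith
  have hsum :=
    mul_card_sub_card_filter_lt_le_sum (fun i ↦ sq_nonneg (w i ω)) (sq_nonneg (δ / 8)) S
  -- the two filters differ only in their decidability instances
  have hcard : #{i | w i ω ^ 2 < (δ / 8) ^ 2} = #{i | w i ω ∈ A} := by congr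
  calc (δ / 8) ^ 2 * δ / 2 * m < (δ / 8) ^ 2 * ((#S : ℝ) - #{i | w i ω ∈ A}) := by
        rw [mul_div_assoc, mul_assoc]
        gcongr
        linarith
    _ ≤ ∑ i ∈ S, w i ω ^ 2 := hcard ▸ hsum

/-- **Lemma (partial sum of the smallest squared Gaussians).**
Fix `δ ∈ (0,1)`. There are constants `C, C' > 0` depending only on `δ` such that
for all `m ≥ 1` and `t ≤ (1 − δ)·m`: if `w_1, …, w_m` are i.i.d. standard Gaussians,
then with probability at least `1 − C'/m`, the sum of the `m − t` smallest among
`w_1², …, w_m²` exceeds `C·m`; equivalently, every subset `S` of size `m − t`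
satisfies `∑_{i ∈ S} w_i² > C·m`. -/
theorem partial_sum_smallest_squared_gaussians
    (δ : ℝ) (hδ0 : 0 < δ) (hδ1 : δ < 1) :
    ∃ C C' : ℝ, 0 < C ∧ 0 < C' ∧
      ∀ (m t : ℕ), 0 < m → (t : ℝ) ≤ (1 - δ) * m →
      ∀ (Ω : Type) (_ : MeasurableSpace Ω) (P : Measure Ω), IsProbabilityMeasure P →
      ∀ (w : Fin m → Ω → ℝ),
        (∀ i, Measurable (w i)) →
        (∀ i, Measure.map (w i) P = gaussianReal 0 1) →
        iIndepFun w P →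
      P {ω | ∀ S : Finset (Fin m), S.card = m - t → C * m < ∑ i ∈ S, w i ω ^ 2}
        ≥ 1 - ENNReal.ofReal (C' / m) :=
  partial_sum_smallest_squared_gaussians_general δ hδ0
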